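/- arXiv:2206.15341 — 5 statements merged into one kernel-verified Lean document; each statement's English description precedes it below -/
import Mathlib

section
/- Let X = {X₁, X₂} be a λ₂-equitable 2-partition of J(n,3), n ≥ 7, with quotient matrix [[p₁₁, p₁₂], [p₂₁, p₂₂]], and let g be the indicator function of X₁. Suppose among the partial differences {g_{ij} : 1 ≤ i < j ≤ n} there are t₁ of type 1, t₂ of type 2, and the rest identically zero. Then p₁₂·p₂₁·n·(n-2) = 24·t₁·(n-4) + 3·t₂·(n-2)·(n-4). -/
open Finset

/-- Number of neighbours (in `J(n,3)`) of the triple `s` inside the cell `X`. -/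
def nbc {n : ℕ} (X : Finset (Finset (Fin n))) (s : Finset (Fin n)) : ℕ :=
  (X.filter fun t => (s ∩ t).card = 2).card

/-- The partial difference `g_{ab}(y) = g(y ∪ {a}) - g(y ∪ {b})`. -/
def pdiff {n : ℕ} (g : Finset (Fin n) → ℝ) (a b : Fin n) :
    Finset (Fin n) → ℝ :=
  fun y => g (insert a y) - g (insert b y)

/-- A function on the 2-subsets of `[n] \ {a, b}` is of type 1 if for some
distinct defining elements `c, d` it is `1` on pairs containing `c` but not
`d`, `-1` on pairs containing `d` but not `c`, and `0` otherwise. -/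
def IsType1 {n : ℕ} (a b : Fin n) (h : Finset (Fin n) → ℝ) : Prop :=
  ∃ c d : Fin n, c ≠ d ∧ c ≠ a ∧ c ≠ b ∧ d ≠ a ∧ d ≠ b ∧
    ∀ y : Finset (Fin n), y.card = 2 → a ∉ y → b ∉ y →
      h y = if c ∈ y ∧ d ∉ y then 1 else if d ∈ y ∧ c ∉ y then -1 else 0

/-- A function on the 2-subsets of `[n] \ {a, b}` is of type 2 if for some
equipartition `M₁ ∪ M₂` of `[n] \ {a, b}` it is `1` on pairs inside `M₁`,
`-1` on pairs inside `M₂`, and `0` otherwise. -/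
def IsType2 {n : ℕ} (a b : Fin n) (h : Finset (Fin n) → ℝ) : Prop :=
  ∃ M1 M2 : Finset (Fin n), Disjoint M1 M2 ∧
    M1 ∪ M2 = Finset.univ \ {a, b} ∧ M1.card = M2.card ∧
    ∀ y : Finset (Fin n), y.card = 2 → a ∉ y → b ∉ y →
      h y = if y ⊆ M1 then 1 else if y ⊆ M2 then -1 else 0

lemma choose2 (m : ℕ) : m.choose 2 * 2 = m * (m - 1) := by
  match m with
  | 0 => rfl
  | (j+1) =>
    rw [Nat.choose_succ_succ]
    have := choose2 j
    match j with
    | 0 => rfl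
    | (k+1) =>
      simp only [Nat.add_sub_cancel] at *
      rw [Nat.choose_one_right] at *
      nlinarith [this]

lemma choose3 (m : ℕ) : m.choose 3 * 6 = m * (m - 1) * (m - 2) := by
  match m with
  | 0 => rfl
  | (j+1) =>
    rw [Nat.choose_succ_succ]
    have h2 := choose2 j
    have h3 := choose3 j
    match j with
    | 0 => rfl
    | 1 => rfl
    | (k+2) =>
      simp only [Nat.add_sub_cancel, show k+2+1-2 = k+1 by omega, show k+2-2=k by omega, show k+2-1=k+1 by omega] at *
      nlinarith [h2, h3]

lemma inter_insert_erase {n : ℕ} {s : Finset (Fin n)} {x y : Fin n} (hx : x ∈ s) (hy : y ∉ s) :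
    s ∩ insert y (s.erase x) = s.erase x := by
  ext z
  simp only [mem_inter, mem_insert, mem_erase]
  constructor
  · rintro ⟨hz, hz2 | hz2⟩
    · exact absurd (hz2 ▸ hz) hy
    · exact hz2
  · rintro ⟨h1, h2⟩; exact ⟨h2, Or.inr ⟨h1, h2⟩⟩

lemma deg_lemma {n : ℕ} (s : Finset (Fin n)) (hs : s.card = 3) :
    ((univ.powersetCard 3).filter fun t => (s ∩ t).card = 2).card = 3 * (n - 3) := by
  have himg : (univ.powersetCard 3).filter (fun t => (s ∩ t).card = 2)
      = (s ×ˢ sᶜ).image (fun p => insert p.2 (s.erase p.1)) := by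
    ext t
    simp only [mem_filter, mem_powersetCard, mem_image, mem_product, mem_compl]
    constructor
    · rintro ⟨⟨-, ht3⟩, hint⟩
      have h1 : (s \ t).card = 1 := by
        have := Finset.card_sdiff_add_card_inter s t
        omega
      have h2 : (t \ s).card = 1 := by
        have := Finset.card_sdiff_add_card_inter t s
        rw [Finset.inter_comm] at this
        omega
      obtain ⟨x, hx⟩ := card_eq_one.mp h1
      obtain ⟨y, hy⟩ := card_eq_one.mp h2
      have hxm : x ∈ s ∧ x ∉ t := mem_sdiff.mp (hx ▸ mem_singleton_self x)
      have hym : y ∈ t ∧ y ∉ s := mem_sdiff.mp (hy ▸ mem_singleton_self y)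
      refine ⟨(x, y), ⟨hxm.1, hym.2⟩, ?_⟩
      ext z
      simp only [mem_insert, mem_erase]
      constructor
      · rintro (rfl | ⟨hzx, hzs⟩)
        · exact hym.1
        · by_contra hzt
          have : z ∈ s \ t := mem_sdiff.mpr ⟨hzs, hzt⟩
          rw [hx, mem_singleton] at this
          exact hzx this
      · intro hzt
        by_cases hzs : z ∈ s
        · exact Or.inr ⟨fun h => hxm.2 (h ▸ hzt), hzs⟩
        · have : z ∈ t \ s := mem_sdiff.mpr ⟨hzt, hzs⟩
          rw [hy, mem_singleton] at this
          exact Or.inl this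
    · rintro ⟨⟨x, y⟩, ⟨hx, hy⟩, rfl⟩
      have hyne : y ∉ s.erase x := fun h => hy (mem_of_mem_erase h)
      constructor
      · exact ⟨subset_univ _, by rw [card_insert_of_notMem hyne, card_erase_of_mem hx, hs]⟩
      · rw [inter_insert_erase hx hy, card_erase_of_mem hx, hs]
  rw [himg, Finset.card_image_of_injOn, card_product, card_compl, hs, Fintype.card_fin]
  rintro ⟨x, y⟩ hxy ⟨x', y'⟩ hxy' heq
  simp only [mem_coe, mem_product, mem_compl] at hxy hxy'
  have heq' : insert y (s.erase x) = insert y' (s.erase x') := heq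
  have hkey : s.erase x = s.erase x' := by
    rw [← inter_insert_erase hxy.1 hxy.2, ← inter_insert_erase hxy'.1 hxy'.2, heq']
  have hxx : x = x' := by
    by_contra hne
    have : x ∈ s.erase x' := mem_erase.mpr ⟨hne, hxy.1⟩
    rw [← hkey] at this
    exact (mem_erase.mp this).1 rfl
  have hyy : y = y' := by
    have : y ∈ insert y' (s.erase x') := by rw [← heq']; exact mem_insert_self _ _
    rcases mem_insert.mp this with h | h
    · exact h
    · exact absurd (mem_of_mem_erase h) hxy.2
  rw [hxx, hyy]

lemma card_cross_left {n : ℕ} (X1 X2 : Finset (Finset (Fin n))) :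
    ((X1 ×ˢ X2).filter fun p => (p.1 ∩ p.2).card = 2).card
      = ∑ s ∈ X1, (X2.filter fun t => (s ∩ t).card = 2).card := by
  rw [Finset.card_eq_sum_card_fiberwise (f := Prod.fst) (t := X1)
    (fun p hp => (mem_product.mp (mem_filter.mp hp).1).1)]
  refine Finset.sum_congr rfl fun s hs => ?_
  rw [← Finset.card_image_of_injOn (f := fun p => p.2)]
  · congr 1
    ext v
    simp only [mem_image, mem_filter, mem_product]
    constructor
    · rintro ⟨⟨a, b⟩, ⟨⟨⟨h1, h2⟩, h3⟩, rfl⟩, rfl⟩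
      exact ⟨h2, h3⟩
    · rintro ⟨h2, h3⟩
      exact ⟨(s, v), ⟨⟨⟨hs, h2⟩, h3⟩, rfl⟩, rfl⟩
  · rintro ⟨a, b⟩ ha ⟨a', b'⟩ hb heq
    simp only [mem_coe, mem_filter] at ha hb
    simp only at heq
    ext1
    · simp [ha.2, hb.2]
    · exact heq

lemma card_cross_right {n : ℕ} (X1 X2 : Finset (Finset (Fin n))) :
    ((X1 ×ˢ X2).filter fun p => (p.1 ∩ p.2).card = 2).card
      = ∑ t ∈ X2, (X1.filter fun s => (s ∩ t).card = 2).card := by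
  rw [Finset.card_eq_sum_card_fiberwise (f := Prod.snd) (t := X2)
    (fun p hp => (mem_product.mp (mem_filter.mp hp).1).2)]
  refine Finset.sum_congr rfl fun t ht => ?_
  rw [← Finset.card_image_of_injOn (f := fun p => p.1)]
  · congr 1
    ext u
    simp only [mem_image, mem_filter, mem_product]
    constructor
    · rintro ⟨⟨a, b⟩, ⟨⟨⟨h1, h2⟩, h3⟩, rfl⟩, rfl⟩
      exact ⟨h1, h3⟩
    · rintro ⟨h1, h3⟩
      exact ⟨(u, t), ⟨⟨⟨h1, ht⟩, h3⟩, rfl⟩, rfl⟩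
  · rintro ⟨a, b⟩ ha ⟨a', b'⟩ hb heq
    simp only [mem_coe, mem_filter] at ha hb
    have : b = t := ha.2
    have : b' = t := hb.2
    simp only at heq
    ext1
    · exact heq
    · simp [ha.2, hb.2]

lemma insert_inter_insert' {n : ℕ} {a b : Fin n} {y : Finset (Fin n)}
    (hab : a ≠ b) (ha : a ∉ y) (hb : b ∉ y) : insert a y ∩ insert b y = y := by
  ext z
  simp only [mem_inter, mem_insert]
  constructor
  · rintro ⟨rfl | h1, rfl | h2⟩
    · exact absurd rfl hab
    · exact absurd h2 ha
    · exact absurd h1 hb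
    · exact h1
  · intro h; exact ⟨Or.inr h, Or.inr h⟩

lemma insert_sdiff_insert' {n : ℕ} {a b : Fin n} {y : Finset (Fin n)}
    (hab : a ≠ b) (ha : a ∉ y) (hb : b ∉ y) : insert a y \ insert b y = {a} := by
  ext z
  simp only [mem_sdiff, mem_insert, mem_singleton]
  constructor
  · rintro ⟨rfl | h1, h2⟩
    · rfl
    · exact absurd (Or.inr h1) h2
  · rintro rfl
    exact ⟨Or.inl rfl, by rintro (rfl | h); exact hab rfl; exact ha h⟩

lemma eq_insert_sdiff {n : ℕ} {s t : Finset (Fin n)} {x : Fin n} (hx : s \ t = {x}) :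
    s = insert x (s ∩ t) := by
  have hxm : x ∈ s ∧ x ∉ t := mem_sdiff.mp (hx ▸ mem_singleton_self x)
  ext z
  simp only [mem_insert, mem_inter]
  constructor
  · intro hz
    by_cases h : z ∈ t
    · exact Or.inr ⟨hz, h⟩
    · have : z ∈ s \ t := mem_sdiff.mpr ⟨hz, h⟩
      rw [hx, mem_singleton] at this
      exact Or.inl this
  · rintro (rfl | ⟨h, -⟩)
    · exact hxm.1
    · exact h

def pick {n : ℕ} (u : Finset (Fin n)) (e : Fin n) : Fin n :=
  if h : u.Nonempty then u.min' h else e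

lemma pick_singleton {n : ℕ} (x e : Fin n) : pick {x} e = x := by
  rw [pick, dif_pos ⟨x, mem_singleton_self x⟩, Finset.min'_singleton]

lemma cross_card_eq {n : ℕ} (hn : 7 ≤ n) (X1 X2 : Finset (Finset (Fin n)))
    (hpart : ∀ s : Finset (Fin n), s.card = 3 ↔ s ∈ X1 ∪ X2)
    (hdisj : Disjoint X1 X2)
    (g : Finset (Fin n) → ℝ) (hg : ∀ s, g s = if s ∈ X1 then 1 else 0) :
    ((X1 ×ˢ X2).filter fun p => (p.1 ∩ p.2).card = 2).card
      = (((((univ : Finset (Fin n)) ×ˢ univ).filter fun p => p.1 < p.2)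
          ×ˢ univ.powersetCard 2).filter
          fun q => q.1.1 ∉ q.2 ∧ q.1.2 ∉ q.2 ∧ pdiff g q.1.1 q.1.2 q.2 ≠ 0).card := by
  have e : Fin n := ⟨0, by omega⟩
  have hc3 : ∀ s ∈ X1 ∪ X2, s.card = 3 := fun s hs => (hpart s).mpr hs
  have hnX1 : ∀ t ∈ X2, t ∉ X1 := fun t ht hc =>
    (Finset.disjoint_left.mp hdisj) hc ht
  apply Finset.card_bij'
    (i := fun p _ => ((min (pick (p.1 \ p.2) e) (pick (p.2 \ p.1) e),
        max (pick (p.1 \ p.2) e) (pick (p.2 \ p.1) e)), p.1 ∩ p.2))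
    (j := fun q _ => if insert q.1.1 q.2 ∈ X1
      then (insert q.1.1 q.2, insert q.1.2 q.2) else (insert q.1.2 q.2, insert q.1.1 q.2))
  · -- i maps into T
    rintro ⟨s, t⟩ hp
    simp only [mem_filter, mem_product] at hp
    obtain ⟨⟨hs1, ht2⟩, hint⟩ := hp
    have hs3 := hc3 s (mem_union_left _ hs1)
    have ht3 := hc3 t (mem_union_right _ ht2)
    have h1 : (s \ t).card = 1 := by
      have := Finset.card_sdiff_add_card_inter s t; omega
    have h2 : (t \ s).card = 1 := by
      have := Finset.card_sdiff_add_card_inter t s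
      rw [Finset.inter_comm] at this; omega
    obtain ⟨x, hx⟩ := card_eq_one.mp h1
    obtain ⟨z, hz⟩ := card_eq_one.mp h2
    have hxm : x ∈ s ∧ x ∉ t := mem_sdiff.mp (hx ▸ mem_singleton_self x)
    have hzm : z ∈ t ∧ z ∉ s := mem_sdiff.mp (hz ▸ mem_singleton_self z)
    have hxz : x ≠ z := fun h => hxm.2 (h ▸ hzm.1)
    have hseq : s = insert x (s ∩ t) := eq_insert_sdiff hx
    have hteq : t = insert z (s ∩ t) := by
      rw [Finset.inter_comm]; exact eq_insert_sdiff hz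
    simp only [hx, hz, pick_singleton, mem_filter, mem_product, mem_powersetCard]
    refine ⟨⟨⟨⟨mem_univ _, mem_univ _⟩, min_lt_max.mpr hxz⟩,
      subset_univ _, hint⟩, ?_, ?_, ?_⟩
    · rcases le_total x z with h | h
      · rw [min_eq_left h]; exact fun hc => hxm.2 (mem_of_mem_inter_right hc)
      · rw [min_eq_right h]; exact fun hc => hzm.2 (mem_of_mem_inter_left hc)
    · rcases le_total x z with h | h
      · rw [max_eq_right h]; exact fun hc => hzm.2 (mem_of_mem_inter_left hc)
      · rw [max_eq_left h]; exact fun hc => hxm.2 (mem_of_mem_inter_right hc)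
    · have hgs : g s = 1 := by rw [hg, if_pos hs1]
      have hgt : g t = 0 := by rw [hg, if_neg (hnX1 t ht2)]
      rcases le_total x z with h | h
      · rw [min_eq_left h, max_eq_right h, pdiff, ← hseq, ← hteq, hgs, hgt]; norm_num
      · rw [min_eq_right h, max_eq_left h, pdiff, ← hteq, ← hseq, hgs, hgt]; norm_num
  · -- j maps into S
    rintro ⟨⟨a, b⟩, y⟩ hq
    simp only [mem_filter, mem_product, mem_powersetCard] at hq
    obtain ⟨⟨⟨-, hab⟩, -, hy2⟩, hay, hby, hne⟩ := hq
    have habne : a ≠ b := ne_of_lt hab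
    have ha3 : (insert a y).card = 3 := by
      rw [card_insert_of_notMem hay, hy2]
    have hb3 : (insert b y).card = 3 := by
      rw [card_insert_of_notMem hby, hy2]
    have hinter : insert a y ∩ insert b y = y := insert_inter_insert' habne hay hby
    by_cases hA : insert a y ∈ X1
    · have hBn : insert b y ∉ X1 := by
        intro hB
        apply hne
        rw [pdiff, hg, hg, if_pos hA, if_pos hB]; ring
      have hB2 : insert b y ∈ X2 := by
        rcases mem_union.mp ((hpart _).mp hb3) with h | h
        · exact absurd h hBn
        · exact h
      simp only [if_pos hA, mem_filter, mem_product]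
      exact ⟨⟨hA, hB2⟩, by rw [hinter, hy2]⟩
    · have hB : insert b y ∈ X1 := by
        by_contra hB
        apply hne
        rw [pdiff, hg, hg, if_neg hA, if_neg hB]; ring
      have hA2 : insert a y ∈ X2 := by
        rcases mem_union.mp ((hpart _).mp ha3) with h | h
        · exact absurd h hA
        · exact h
      simp only [if_neg hA, mem_filter, mem_product]
      exact ⟨⟨hB, hA2⟩, by rw [Finset.inter_comm, hinter, hy2]⟩
  · -- j ∘ i = id
    rintro ⟨s, t⟩ hp
    simp only [mem_filter, mem_product] at hp
    obtain ⟨⟨hs1, ht2⟩, hint⟩ := hp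
    have hs3 := hc3 s (mem_union_left _ hs1)
    have ht3 := hc3 t (mem_union_right _ ht2)
    have h1 : (s \ t).card = 1 := by
      have := Finset.card_sdiff_add_card_inter s t; omega
    have h2 : (t \ s).card = 1 := by
      have := Finset.card_sdiff_add_card_inter t s
      rw [Finset.inter_comm] at this; omega
    obtain ⟨x, hx⟩ := card_eq_one.mp h1
    obtain ⟨z, hz⟩ := card_eq_one.mp h2
    have hxm : x ∈ s ∧ x ∉ t := mem_sdiff.mp (hx ▸ mem_singleton_self x)
    have hzm : z ∈ t ∧ z ∉ s := mem_sdiff.mp (hz ▸ mem_singleton_self z)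
    have hseq : s = insert x (s ∩ t) := eq_insert_sdiff hx
    have hteq : t = insert z (s ∩ t) := by
      rw [Finset.inter_comm]; exact eq_insert_sdiff hz
    have htn1 : t ∉ X1 := hnX1 t ht2
    simp only [hx, hz, pick_singleton]
    rcases le_total x z with h | h
    · rw [min_eq_left h, max_eq_right h]
      simp only [← hseq, ← hteq, if_pos hs1]
    · rw [min_eq_right h, max_eq_left h]
      simp only [← hseq, ← hteq, if_neg htn1]
  · -- i ∘ j = id
    rintro ⟨⟨a, b⟩, y⟩ hq
    simp only [mem_filter, mem_product, mem_powersetCard] at hq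
    obtain ⟨⟨⟨-, hab⟩, -, hy2⟩, hay, hby, hne⟩ := hq
    have habne : a ≠ b := ne_of_lt hab
    have hinter : insert a y ∩ insert b y = y := insert_inter_insert' habne hay hby
    have hinter' : insert b y ∩ insert a y = y := by rw [Finset.inter_comm]; exact hinter
    have hda : insert a y \ insert b y = {a} := insert_sdiff_insert' habne hay hby
    have hdb : insert b y \ insert a y = {b} := insert_sdiff_insert' habne.symm hby hay
    by_cases hA : insert a y ∈ X1
    · simp only [if_pos hA, hda, hdb, pick_singleton, hinter,
        min_eq_left (le_of_lt hab), max_eq_right (le_of_lt hab)]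
    · simp only [if_neg hA, hda, hdb, pick_singleton, hinter',
        min_eq_right (le_of_lt hab), max_eq_left (le_of_lt hab)]

lemma card_filter_product {α β : Type*} [DecidableEq α] [DecidableEq β]
    (A : Finset α) (B : Finset β) (P : α × β → Prop) [DecidablePred P] :
    ((A ×ˢ B).filter P).card = ∑ a ∈ A, (B.filter fun b => P (a, b)).card := by
  rw [Finset.card_eq_sum_card_fiberwise (f := Prod.fst) (t := A)
    (fun p hp => (mem_product.mp (mem_filter.mp hp).1).1)]
  refine Finset.sum_congr rfl fun s hs => ?_
  rw [← Finset.card_image_of_injOn (f := fun p => p.2)]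
  · congr 1
    ext v
    simp only [mem_image, mem_filter, mem_product]
    constructor
    · rintro ⟨⟨x, y⟩, ⟨⟨⟨h1, h2⟩, h3⟩, rfl⟩, rfl⟩
      exact ⟨h2, h3⟩
    · rintro ⟨h2, h3⟩
      exact ⟨(s, v), ⟨⟨⟨hs, h2⟩, h3⟩, rfl⟩, rfl⟩
  · rintro ⟨x, y⟩ ha ⟨x', y'⟩ hb heq
    simp only [mem_coe, mem_filter] at ha hb
    simp only at heq
    ext1
    · simp [ha.2, hb.2]
    · exact heq

lemma card_four {n : ℕ} {a b c d : Fin n} (hcd : c ≠ d) (hca : c ≠ a) (hcb : c ≠ b)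
    (hda : d ≠ a) (hdb : d ≠ b) (hab : a ≠ b) :
    (univ \ {a, b, c, d} : Finset (Fin n)).card = n - 4 := by
  rw [Finset.card_sdiff_of_subset (subset_univ _), Finset.card_univ, Fintype.card_fin]
  congr 1
  rw [card_insert_of_notMem, card_insert_of_notMem, card_insert_of_notMem, card_singleton]
  · simp only [mem_singleton]; exact hcd
  · simp only [mem_insert, mem_singleton]; push_neg; exact ⟨Ne.symm hcb, Ne.symm hdb⟩
  · simp only [mem_insert, mem_singleton]; push_neg
    exact ⟨hab, hca.symm, hda.symm⟩

lemma type1_count {n : ℕ} (hn : 7 ≤ n) {a b : Fin n} (hab : a < b)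
    {h : Finset (Fin n) → ℝ} (h1 : IsType1 a b h) :
    ((univ.powersetCard 2).filter fun y => a ∉ y ∧ b ∉ y ∧ h y ≠ 0).card = 2 * (n - 4) := by
  obtain ⟨c, d, hcd, hca, hcb, hda, hdb, hval⟩ := h1
  have habne : a ≠ b := ne_of_lt hab
  have key : (univ.powersetCard 2).filter (fun y => a ∉ y ∧ b ∉ y ∧ h y ≠ 0)
      = ((univ \ {a, b, c, d}).image fun w => ({c, w} : Finset (Fin n)))
        ∪ ((univ \ {a, b, c, d}).image fun w => ({d, w} : Finset (Fin n))) := by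
    ext y
    simp only [mem_filter, mem_powersetCard, mem_union, mem_image, mem_sdiff,
      mem_insert, mem_singleton, mem_univ, subset_univ, true_and]
    constructor
    · rintro ⟨hy2, hay, hby, hne⟩
      rw [hval y hy2 hay hby] at hne
      by_cases hc : c ∈ y ∧ d ∉ y
      · left
        obtain ⟨w, hw⟩ := card_eq_one.mp (by rw [card_erase_of_mem hc.1, hy2] : (y.erase c).card = 1)
        have hwm : w ∈ y ∧ w ≠ c := by
          have := hw ▸ mem_singleton_self w
          exact ⟨mem_of_mem_erase this, (mem_erase.mp this).1⟩
        refine ⟨w, ?_, ?_⟩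
        · push_neg
          exact ⟨fun hh => hay (hh ▸ hwm.1), fun hh => hby (hh ▸ hwm.1),
            hwm.2, fun hh => hc.2 (hh ▸ hwm.1)⟩
        · rw [show ({c, w} : Finset (Fin n)) = insert c (y.erase c) by rw [hw], insert_erase hc.1]
      · by_cases hd : d ∈ y ∧ c ∉ y
        · right
          obtain ⟨w, hw⟩ := card_eq_one.mp (by rw [card_erase_of_mem hd.1, hy2] : (y.erase d).card = 1)
          have hwm : w ∈ y ∧ w ≠ d := by
            have := hw ▸ mem_singleton_self w
            exact ⟨mem_of_mem_erase this, (mem_erase.mp this).1⟩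
          refine ⟨w, ?_, ?_⟩
          · push_neg
            exact ⟨fun hh => hay (hh ▸ hwm.1), fun hh => hby (hh ▸ hwm.1),
              fun hh => hd.2 (hh ▸ hwm.1), hwm.2⟩
          · rw [show ({d, w} : Finset (Fin n)) = insert d (y.erase d) by rw [hw], insert_erase hd.1]
        · rw [if_neg hc, if_neg hd] at hne
          exact absurd rfl hne
    · rintro (⟨w, hw, rfl⟩ | ⟨w, hw, rfl⟩)
      · push_neg at hw
        obtain ⟨hwa, hwb, hwc, hwd⟩ := hw
        have hcw : c ∉ ({w} : Finset (Fin n)) := by simp [Ne.symm hwc]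
        have hy2 : ({c, w} : Finset (Fin n)).card = 2 := by
          rw [show ({c, w} : Finset (Fin n)) = insert c {w} from rfl,
            card_insert_of_notMem hcw, card_singleton]
        have hay : a ∉ ({c, w} : Finset (Fin n)) := by
          simp [Ne.symm hca, Ne.symm hwa]
        have hby : b ∉ ({c, w} : Finset (Fin n)) := by
          simp [Ne.symm hcb, Ne.symm hwb]
        refine ⟨hy2, hay, hby, ?_⟩
        rw [hval _ hy2 hay hby, if_pos ⟨mem_insert_self _ _, by simp [hcd.symm, Ne.symm hwd]⟩]
        norm_num
      · push_neg at hw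
        obtain ⟨hwa, hwb, hwc, hwd⟩ := hw
        have hdw : d ∉ ({w} : Finset (Fin n)) := by simp [Ne.symm hwd]
        have hy2 : ({d, w} : Finset (Fin n)).card = 2 := by
          rw [show ({d, w} : Finset (Fin n)) = insert d {w} from rfl,
            card_insert_of_notMem hdw, card_singleton]
        have hay : a ∉ ({d, w} : Finset (Fin n)) := by
          simp [Ne.symm hda, Ne.symm hwa]
        have hby : b ∉ ({d, w} : Finset (Fin n)) := by
          simp [Ne.symm hdb, Ne.symm hwb]
        refine ⟨hy2, hay, hby, ?_⟩
        have hcm : c ∉ ({d, w} : Finset (Fin n)) := by simp [hcd, hwc.symm]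
        rw [hval _ hy2 hay hby, if_neg (fun hh => hcm hh.1),
          if_pos ⟨mem_insert_self _ _, hcm⟩]
        norm_num
  rw [key, card_union_of_disjoint, Finset.card_image_of_injOn, Finset.card_image_of_injOn,
    card_four hcd hca hcb hda hdb habne]
  · omega
  · rintro w hwmem w' hwmem' heq
    simp only [mem_coe, mem_sdiff, mem_insert, mem_singleton] at hwmem hwmem'
    push_neg at hwmem hwmem'
    have heq' : ({d, w} : Finset (Fin n)) = {d, w'} := heq
    have : w ∈ ({d, w'} : Finset (Fin n)) := by
      rw [← heq']; exact mem_insert_of_mem (mem_singleton_self w)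
    rcases mem_insert.mp this with hh | hh
    · exact absurd hh hwmem.2.2.2.2
    · exact mem_singleton.mp hh
  · rintro w hwmem w' hwmem' heq
    simp only [mem_coe, mem_sdiff, mem_insert, mem_singleton] at hwmem hwmem'
    push_neg at hwmem hwmem'
    have heq' : ({c, w} : Finset (Fin n)) = {c, w'} := heq
    have : w ∈ ({c, w'} : Finset (Fin n)) := by
      rw [← heq']; exact mem_insert_of_mem (mem_singleton_self w)
    rcases mem_insert.mp this with hh | hh
    · exact absurd hh hwmem.2.2.2.1
    · exact mem_singleton.mp hh
  · rw [Finset.disjoint_left]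
    intro y hy1 hy2
    obtain ⟨w, hw, rfl⟩ := mem_image.mp hy1
    obtain ⟨w', hw', heq⟩ := mem_image.mp hy2
    simp only [mem_sdiff, mem_insert, mem_singleton] at hw hw'
    push_neg at hw hw'
    have heq' : ({d, w'} : Finset (Fin n)) = {c, w} := heq
    have : d ∈ ({c, w} : Finset (Fin n)) := by
      rw [← heq']; exact mem_insert_self _ _
    rcases mem_insert.mp this with hh | hh
    · exact hcd hh.symm
    · exact hw.2.2.2.2 (mem_singleton.mp hh).symm

lemma type2_count {n : ℕ} (hn : 7 ≤ n) {a b : Fin n} (hab : a < b)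
    {h : Finset (Fin n) → ℝ} (h2 : IsType2 a b h) :
    12 * ((univ.powersetCard 2).filter fun y => a ∉ y ∧ b ∉ y ∧ h y ≠ 0).card
      = 3 * (n - 2) * (n - 4) := by
  obtain ⟨M1, M2, hMd, hMu, hMc, hval⟩ := h2
  have habne : a ≠ b := ne_of_lt hab
  have hM1sub : M1 ⊆ univ \ {a, b} := hMu ▸ Finset.subset_union_left
  have hM2sub : M2 ⊆ univ \ {a, b} := hMu ▸ Finset.subset_union_right
  have hm : 2 * M1.card = n - 2 := by
    have hcu : (univ \ {a, b} : Finset (Fin n)).card = n - 2 := by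
      rw [Finset.card_sdiff_of_subset (subset_univ _), Finset.card_univ, Fintype.card_fin,
        card_insert_of_notMem (by simp [habne]), card_singleton]
    rw [← hcu, ← hMu, card_union_of_disjoint hMd, ← hMc]
    ring
  have key : (univ.powersetCard 2).filter (fun y => a ∉ y ∧ b ∉ y ∧ h y ≠ 0)
      = M1.powersetCard 2 ∪ M2.powersetCard 2 := by
    ext y
    simp only [mem_filter, mem_powersetCard, mem_union, subset_univ, true_and]
    constructor
    · rintro ⟨hy2, hay, hby, hne⟩
      rw [hval y hy2 hay hby] at hne
      by_cases hy1 : y ⊆ M1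
      · exact Or.inl ⟨hy1, hy2⟩
      · by_cases hyM2 : y ⊆ M2
        · exact Or.inr ⟨hyM2, hy2⟩
        · rw [if_neg hy1, if_neg hyM2] at hne
          exact absurd rfl hne
    · have notab : ∀ y : Finset (Fin n), y ⊆ univ \ {a, b} → a ∉ y ∧ b ∉ y := by
        intro y hy
        constructor <;> intro hm' <;> have := hy hm' <;>
          simp [mem_sdiff, mem_insert, mem_singleton] at this
      rintro (⟨hy1, hy2⟩ | ⟨hy1, hy2⟩)
      · obtain ⟨hay, hby⟩ := notab y (hy1.trans hM1sub)
        refine ⟨hy2, hay, hby, ?_⟩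
        rw [hval y hy2 hay hby, if_pos hy1]
        norm_num
      · obtain ⟨hay, hby⟩ := notab y (hy1.trans hM2sub)
        refine ⟨hy2, hay, hby, ?_⟩
        have hyn1 : ¬ y ⊆ M1 := by
          intro hc
          obtain ⟨z, hz⟩ := Finset.card_pos.mp (by omega : 0 < y.card)
          exact Finset.disjoint_left.mp hMd (hc hz) (hy1 hz)
        rw [hval y hy2 hay hby, if_neg hyn1, if_pos hy1]
        norm_num
  have hdisj2 : Disjoint (M1.powersetCard 2) (M2.powersetCard 2) := by
    rw [Finset.disjoint_left]
    intro y hy1 hy2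
    rw [mem_powersetCard] at hy1 hy2
    obtain ⟨z, hz⟩ := Finset.card_pos.mp (by omega : 0 < y.card)
    exact Finset.disjoint_left.mp hMd (hy1.1 hz) (hy2.1 hz)
  rw [key, card_union_of_disjoint hdisj2, Finset.card_powersetCard, Finset.card_powersetCard,
    ← hMc]
  have hm3 : 3 ≤ M1.card := by omega
  have hthis : n - 2 = 2 * M1.card := hm.symm
  have hn4 : n - 4 = 2 * (M1.card - 1) := by omega
  obtain ⟨q, hq⟩ := Nat.exists_eq_add_of_le (by omega : 1 ≤ M1.card)
  rw [hthis, hn4, hq]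
  have h2' := choose2 (1 + q)
  simp only [Nat.add_sub_cancel_left] at h2' ⊢
  nlinarith [h2']

lemma zero_count {n : ℕ} {a b : Fin n} {h : Finset (Fin n) → ℝ}
    (hz : ∀ y : Finset (Fin n), y.card = 2 → a ∉ y → b ∉ y → h y = 0) :
    ((univ.powersetCard 2).filter fun y => a ∉ y ∧ b ∉ y ∧ h y ≠ 0).card = 0 := by
  rw [Finset.card_eq_zero]
  rw [Finset.eq_empty_iff_forall_notMem]
  intro y hy
  simp only [mem_filter, mem_powersetCard, subset_univ, true_and] at hy
  exact hy.2.2.2 (hz y hy.1 hy.2.1 hy.2.2.1)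

lemma not_both {n : ℕ} (hn : 7 ≤ n) {a b : Fin n} (hab : a < b)
    {h : Finset (Fin n) → ℝ} (h1 : IsType1 a b h) (h2 : IsType2 a b h) : False := by
  obtain ⟨c, d, hcd, hca, hcb, hda, hdb, hval1⟩ := h1
  obtain ⟨M1, M2, hMd, hMu, hMc, hval2⟩ := h2
  have hcard : 2 ≤ (univ \ {a, b, c, d} : Finset (Fin n)).card := by
    rw [card_four hcd hca hcb hda hdb (ne_of_lt hab)]; omega
  obtain ⟨x1, hx1, x2, hx2, hx12⟩ := Finset.one_lt_card.mp
    (show 1 < (univ \ {a, b, c, d} : Finset (Fin n)).card by omega)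
  simp only [mem_sdiff, mem_insert, mem_singleton, mem_univ, true_and] at hx1 hx2
  push_neg at hx1 hx2
  obtain ⟨h1a, h1b, h1c, h1d⟩ := hx1
  obtain ⟨h2a, h2b, h2c, h2d⟩ := hx2
  -- {c, x} ⊆ M1 for x = x1, x2
  have hsub : ∀ x : Fin n, x ≠ a → x ≠ b → x ≠ c → x ≠ d → ({c, x} : Finset (Fin n)) ⊆ M1 := by
    intro x hxa hxb hxc hxd
    have hy2 : ({c, x} : Finset (Fin n)).card = 2 := by
      rw [show ({c, x} : Finset (Fin n)) = insert c {x} from rfl,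
        card_insert_of_notMem (by simp [Ne.symm hxc]), card_singleton]
    have hay : a ∉ ({c, x} : Finset (Fin n)) := by simp [Ne.symm hca, Ne.symm hxa]
    have hby : b ∉ ({c, x} : Finset (Fin n)) := by simp [Ne.symm hcb, Ne.symm hxb]
    have hv1 := hval1 _ hy2 hay hby
    have hv2 := hval2 _ hy2 hay hby
    rw [if_pos ⟨mem_insert_self _ _, by simp [hcd.symm, Ne.symm hxd]⟩] at hv1
    rw [hv1] at hv2
    by_cases hs1 : ({c, x} : Finset (Fin n)) ⊆ M1
    · exact hs1
    · exfalso
      rw [if_neg hs1] at hv2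
      by_cases hs2 : ({c, x} : Finset (Fin n)) ⊆ M2
      · rw [if_pos hs2] at hv2; norm_num at hv2
      · rw [if_neg hs2] at hv2; norm_num at hv2
  have hs1 := hsub x1 h1a h1b h1c h1d
  have hs2 := hsub x2 h2a h2b h2c h2d
  -- now y = {x1, x2} ⊆ M1 but hval1 gives 0
  have hx1M : x1 ∈ M1 := hs1 (mem_insert_of_mem (mem_singleton_self _))
  have hx2M : x2 ∈ M1 := hs2 (mem_insert_of_mem (mem_singleton_self _))
  have hysub : ({x1, x2} : Finset (Fin n)) ⊆ M1 := by
    intro z hz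
    rcases mem_insert.mp hz with rfl | hz
    · exact hx1M
    · exact (mem_singleton.mp hz) ▸ hx2M
  have hy2 : ({x1, x2} : Finset (Fin n)).card = 2 := by
    rw [show ({x1, x2} : Finset (Fin n)) = insert x1 {x2} from rfl,
      card_insert_of_notMem (by simp [hx12]), card_singleton]
  have hay : a ∉ ({x1, x2} : Finset (Fin n)) := by simp [Ne.symm h1a, Ne.symm h2a]
  have hby : b ∉ ({x1, x2} : Finset (Fin n)) := by simp [Ne.symm h1b, Ne.symm h2b]
  have hv1 := hval1 _ hy2 hay hby
  have hv2 := hval2 _ hy2 hay hby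
  have hcny : c ∉ ({x1, x2} : Finset (Fin n)) := by simp [Ne.symm h1c, Ne.symm h2c]
  have hdny : d ∉ ({x1, x2} : Finset (Fin n)) := by simp [Ne.symm h1d, Ne.symm h2d]
  rw [if_neg (fun hh => hcny hh.1), if_neg (fun hh => hdny hh.1)] at hv1
  rw [if_pos hysub] at hv2
  rw [hv1] at hv2
  norm_num at hv2

/-- counting nonzero values of the partial differences of the
indicator function of `X₁` in a `λ₂`-equitable 2-partition of `J(n,3)` gives
`p₁₂ p₂₁ n (n-2) = 24 t₁ (n-4) + 3 t₂ (n-2)(n-4)`. -/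
theorem stmt11 (n : ℕ) (hn : 7 ≤ n)
    (X1 X2 : Finset (Finset (Fin n)))
    (hpart : ∀ s : Finset (Fin n), s.card = 3 ↔ s ∈ X1 ∪ X2)
    (hdisj : Disjoint X1 X2) (hne1 : X1.Nonempty) (hne2 : X2.Nonempty)
    (p11 p12 p21 p22 : ℕ)
    (h11 : ∀ s ∈ X1, nbc X1 s = p11) (h12 : ∀ s ∈ X1, nbc X2 s = p12)
    (h21 : ∀ s ∈ X2, nbc X1 s = p21) (h22 : ∀ s ∈ X2, nbc X2 s = p22)
    (hlam : (p11 : ℤ) - (p21 : ℤ) = (n : ℤ) - 7)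
    (g : Finset (Fin n) → ℝ)
    (hg : ∀ s : Finset (Fin n), g s = if s ∈ X1 then 1 else 0)
    (t1 t2 : ℕ)
    (ht1 : t1 = {p : Fin n × Fin n |
      p.1 < p.2 ∧ IsType1 p.1 p.2 (pdiff g p.1 p.2)}.ncard)
    (ht2 : t2 = {p : Fin n × Fin n |
      p.1 < p.2 ∧ IsType2 p.1 p.2 (pdiff g p.1 p.2)}.ncard)
    (hall : ∀ p : Fin n × Fin n, p.1 < p.2 →
      IsType1 p.1 p.2 (pdiff g p.1 p.2) ∨ IsType2 p.1 p.2 (pdiff g p.1 p.2) ∨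
        (∀ y : Finset (Fin n), y.card = 2 → p.1 ∉ y → p.2 ∉ y →
          pdiff g p.1 p.2 y = 0)) :
    p12 * p21 * n * (n - 2) = 24 * t1 * (n - 4) + 3 * t2 * (n - 2) * (n - 4) := by
  classical
  set E := ((X1 ×ˢ X2).filter fun p => (p.1 ∩ p.2).card = 2).card with hE
  -- E = |X1| * p12
  have hE1 : E = X1.card * p12 := by
    rw [hE, card_cross_left]
    have hc : ∀ s ∈ X1, (X2.filter fun t => (s ∩ t).card = 2).card = p12 :=
      fun s hs => h12 s hs
    rw [Finset.sum_congr rfl hc, Finset.sum_const, smul_eq_mul]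
  -- E = |X2| * p21
  have hE2 : E = X2.card * p21 := by
    rw [hE, card_cross_right]
    have hc : ∀ t ∈ X2, (X1.filter fun s => (s ∩ t).card = 2).card = p21 := by
      intro t ht
      rw [← h21 t ht, nbc]
      congr 1
      apply Finset.filter_congr
      intro s hs
      rw [Finset.inter_comm]
    rw [Finset.sum_congr rfl hc, Finset.sum_const, smul_eq_mul]
  -- |X1| + |X2| = choose n 3
  have hcard : X1.card + X2.card = n.choose 3 := by
    rw [← card_union_of_disjoint hdisj]
    have : X1 ∪ X2 = (univ : Finset (Fin n)).powersetCard 3 := by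
      ext s
      rw [mem_powersetCard]
      constructor
      · intro hs; exact ⟨subset_univ _, (hpart s).mpr hs⟩
      · rintro ⟨-, hs⟩; exact (hpart s).mp hs
    rw [this, Finset.card_powersetCard, Finset.card_univ, Fintype.card_fin]
  -- degree sums
  have hdeg : ∀ s ∈ X1 ∪ X2, nbc X1 s + nbc X2 s = 3 * (n - 3) := by
    intro s hs
    have hs3 := (hpart s).mpr hs
    rw [← deg_lemma s hs3]
    rw [nbc, nbc, ← card_union_of_disjoint (disjoint_filter_filter hdisj)]
    congr 1
    rw [← Finset.filter_union]
    congr 1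
    ext t
    rw [mem_powersetCard]
    constructor
    · intro ht; exact ⟨subset_univ _, (hpart t).mpr ht⟩
    · rintro ⟨-, ht⟩; exact (hpart t).mp ht
  have hsum12 : p11 + p12 = 3 * (n - 3) := by
    obtain ⟨s, hs⟩ := hne1
    rw [← h11 s hs, ← h12 s hs]
    exact hdeg s (mem_union_left _ hs)
  have hsum21 : p21 + p22 = 3 * (n - 3) := by
    obtain ⟨s, hs⟩ := hne2
    rw [← h21 s hs, ← h22 s hs]
    exact hdeg s (mem_union_right _ hs)
  have hpp : p12 + p21 = 2 * n - 2 := by omega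
  -- E * (p12 + p21) = p12 * p21 * (choose n 3)
  have hkey1 : E * (2 * n - 2) = p12 * p21 * n.choose 3 := by
    rw [← hpp, ← hcard, mul_add]
    nth_rewrite 1 [hE2]
    nth_rewrite 1 [hE1]
    ring
  -- 12 E (n-1) = p12 p21 n (n-1)(n-2)
  have hch3 := choose3 n
  have hkey2 : 12 * E * (n - 1) = p12 * p21 * n * (n - 1) * (n - 2) := by
    have h1 : 12 * E * (n - 1) = (E * (2 * n - 2)) * 6 := by
      have : 2 * n - 2 = 2 * (n - 1) := by omega
      rw [this]; ring
    rw [h1, hkey1]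
    have h2 : p12 * p21 * n.choose 3 * 6 = p12 * p21 * (n.choose 3 * 6) := by ring
    rw [h2, hch3]
    ring
  -- now the pdiff counting
  set P := (((univ : Finset (Fin n)) ×ˢ univ).filter fun p => p.1 < p.2) with hP
  have hEcnt : E = ∑ p ∈ P, ((univ.powersetCard 2).filter
      fun y => p.1 ∉ y ∧ p.2 ∉ y ∧ pdiff g p.1 p.2 y ≠ 0).card := by
    rw [hE, cross_card_eq hn X1 X2 hpart hdisj g hg, hP,
      card_filter_product]
  set P1 := P.filter (fun p => IsType1 p.1 p.2 (pdiff g p.1 p.2)) with hP1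
  set P2 := P.filter (fun p => IsType2 p.1 p.2 (pdiff g p.1 p.2)) with hP2
  have hmemP : ∀ p : Fin n × Fin n, p ∈ P ↔ p.1 < p.2 := by
    intro p
    rw [hP, mem_filter, mem_product]
    simp [mem_univ]
  have ht1' : t1 = P1.card := by
    rw [ht1, ← Set.ncard_coe_finset]
    congr 1
    ext p
    simp only [Finset.coe_filter, Set.mem_setOf_eq, hmemP, Set.mem_sep_iff]
    rw [hP1]
    simp only [Finset.coe_filter, Set.mem_setOf_eq, hmemP]
  have ht2' : t2 = P2.card := by
    rw [ht2, ← Set.ncard_coe_finset]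
    congr 1
    ext p
    rw [hP2]
    simp only [Finset.coe_filter, Set.mem_setOf_eq, hmemP]
  have hdisjP : Disjoint P1 P2 := by
    rw [Finset.disjoint_left]
    intro p hp1 hp2
    rw [hP1, mem_filter] at hp1
    rw [hP2, mem_filter] at hp2
    exact not_both hn ((hmemP p).mp hp1.1) hp1.2 hp2.2
  have hsubP : P1 ∪ P2 ⊆ P := by
    intro p hp
    rcases mem_union.mp hp with h | h
    · exact mem_of_mem_filter p h
    · exact mem_of_mem_filter p h
  -- 12 E = 24 t1 (n-4) + 3 t2 (n-2)(n-4)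
  have hkey3 : 12 * E = 24 * t1 * (n - 4) + 3 * t2 * (n - 2) * (n - 4) := by
    rw [hEcnt, Finset.mul_sum]
    rw [← Finset.sum_sdiff hsubP]
    have hz : ∀ p ∈ P \ (P1 ∪ P2), 12 * ((univ.powersetCard 2).filter
        fun y => p.1 ∉ y ∧ p.2 ∉ y ∧ pdiff g p.1 p.2 y ≠ 0).card = 0 := by
      intro p hp
      rw [mem_sdiff, mem_union] at hp
      push_neg at hp
      obtain ⟨hpP, hp1, hp2⟩ := hp
      have hlt := (hmemP p).mp hpP
      have hnt1 : ¬ IsType1 p.1 p.2 (pdiff g p.1 p.2) := fun hc =>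
        hp1 (mem_filter.mpr ⟨hpP, hc⟩)
      have hnt2 : ¬ IsType2 p.1 p.2 (pdiff g p.1 p.2) := fun hc =>
        hp2 (mem_filter.mpr ⟨hpP, hc⟩)
      rcases hall p hlt with h | h | h
      · exact absurd h hnt1
      · exact absurd h hnt2
      · rw [zero_count h]
    rw [Finset.sum_congr rfl hz, Finset.sum_const, smul_eq_mul, mul_zero, zero_add]
    rw [Finset.sum_union hdisjP]
    have hs1 : ∀ p ∈ P1, 12 * ((univ.powersetCard 2).filter
        fun y => p.1 ∉ y ∧ p.2 ∉ y ∧ pdiff g p.1 p.2 y ≠ 0).card = 24 * (n - 4) := by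
      intro p hp
      rw [mem_filter] at hp
      rw [type1_count hn ((hmemP p).mp hp.1) hp.2]
      ring
    have hs2 : ∀ p ∈ P2, 12 * ((univ.powersetCard 2).filter
        fun y => p.1 ∉ y ∧ p.2 ∉ y ∧ pdiff g p.1 p.2 y ≠ 0).card
        = 3 * (n - 2) * (n - 4) := by
      intro p hp
      rw [mem_filter] at hp
      exact type2_count hn ((hmemP p).mp hp.1) hp.2
    rw [Finset.sum_congr rfl hs1, Finset.sum_congr rfl hs2,
      Finset.sum_const, Finset.sum_const, smul_eq_mul, smul_eq_mul,
      ← ht1', ← ht2']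
    ring
  -- finish: cancel (n-1)
  have hfin : (p12 * p21 * n * (n - 2)) * (n - 1) = (24 * t1 * (n - 4)
      + 3 * t2 * (n - 2) * (n - 4)) * (n - 1) := by
    rw [← hkey3, hkey2]
    ring
  have hn1 : 0 < n - 1 := by omega
  exact Nat.eq_of_mul_eq_mul_right hn1 hfin
end

section
/- Let X = {X₁, X₂} be a θ-equitable 2-partition of J(n,3). For any four distinct elements a, b, c, d ∈ [n], with ū denoting the X₁-indicator and S̄ := Σ_{u∈S} ū: (ab*)-bar minus (cd*)-bar = ((θ+3)/2)·(abc-bar + abd-bar - acd-bar - bcd-bar). -/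
open Finset

/-- `(ij*)-bar`: the number of members of the cell `X` (triples) containing
both `i` and `j`. -/
def rowbar {n : ℕ} (X : Finset (Finset (Fin n))) (i j : Fin n) : ℕ :=
  (X.filter fun s => i ∈ s ∧ j ∈ s).card

/-- The `X₁`-indicator of a vertex, as a real number. -/
def indR {n : ℕ} (X : Finset (Finset (Fin n))) (s : Finset (Fin n)) : ℝ :=
  if s ∈ X then 1 else 0

lemma tricard {n : ℕ} (a b c : Fin n) (hab : a ≠ b) (hac : a ≠ c) (hbc : b ≠ c) :
    ({a,b,c} : Finset (Fin n)).card = 3 := by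
  rw [card_insert_of_notMem (by simp [hab, hac]),
    card_insert_of_notMem (by simp [hbc]), card_singleton]

lemma key {n : ℕ} (X1 : Finset (Finset (Fin n))) (hX1 : ∀ t ∈ X1, t.card = 3)
    (a b c : Fin n) (hab : a ≠ b) (hac : a ≠ c) (hbc : b ≠ c) :
    rowbar X1 a b + rowbar X1 a c + rowbar X1 b c
      = nbc X1 {a,b,c} + (if ({a,b,c} : Finset (Fin n)) ∈ X1 then 3 else 0) := by
  have h3 : (if ({a,b,c} : Finset (Fin n)) ∈ X1 then 3 else 0)
      = ∑ t ∈ X1, if t = ({a,b,c} : Finset (Fin n)) then 3 else 0 := by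
    rw [Finset.sum_ite_eq' X1 ({a,b,c} : Finset (Fin n)) (fun _ => 3)]
  rw [rowbar, rowbar, rowbar, nbc, h3, card_filter, card_filter, card_filter, card_filter,
    ← Finset.sum_add_distrib, ← Finset.sum_add_distrib, ← Finset.sum_add_distrib]
  apply Finset.sum_congr rfl
  intro t ht
  have htc := hX1 t ht
  have hic : (({a,b,c} : Finset (Fin n)) ∩ t).card
      = (if a ∈ t then 1 else 0) + (if b ∈ t then 1 else 0) + (if c ∈ t then 1 else 0) := by
    rw [← Finset.filter_mem_eq_inter, card_filter]
    rw [show ({a,b,c} : Finset (Fin n)) = insert a (insert b {c}) from rfl]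
    rw [Finset.sum_insert (by simp [hab, hac]), Finset.sum_insert (by simp [hbc]),
      Finset.sum_singleton]
    ring
  have heq : t = ({a,b,c} : Finset (Fin n)) ↔ (a ∈ t ∧ b ∈ t ∧ c ∈ t) := by
    constructor
    · rintro rfl; simp
    · rintro ⟨h1, h2, h3⟩
      refine (Finset.eq_of_subset_of_card_le ?_ ?_).symm
      · intro x hx; simp at hx; rcases hx with rfl|rfl|rfl <;> assumption
      · rw [htc, tricard a b c hab hac hbc]
  by_cases ha : a ∈ t <;> by_cases hb : b ∈ t <;> by_cases hc : c ∈ t <;>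
    simp [ha, hb, hc, hic, heq, Finset.card_pair hab, Finset.card_pair hac,
      Finset.card_pair hbc, tricard a b c hab hac hbc] <;> split_ifs <;> omega

lemma key2 {n : ℕ} (X1 X2 : Finset (Finset (Fin n)))
    (hpart : ∀ s : Finset (Fin n), s.card = 3 ↔ s ∈ X1 ∪ X2)
    (hdisj : Disjoint X1 X2) (p11 p21 : ℕ)
    (h11 : ∀ s ∈ X1, nbc X1 s = p11) (h21 : ∀ s ∈ X2, nbc X1 s = p21)
    (θ : ℤ) (hθ : θ = (p11 : ℤ) - (p21 : ℤ))
    (a b c : Fin n) (hab : a ≠ b) (hac : a ≠ c) (hbc : b ≠ c) :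
    (rowbar X1 a b : ℝ) + rowbar X1 a c + rowbar X1 b c
      = p21 + ((θ : ℝ) + 3) * indR X1 {a,b,c} := by
  have hX1 : ∀ t ∈ X1, t.card = 3 := fun t ht => (hpart t).2 (mem_union_left _ ht)
  have hk := key X1 hX1 a b c hab hac hbc
  have hs : ({a,b,c} : Finset (Fin n)) ∈ X1 ∪ X2 :=
    (hpart _).1 (tricard a b c hab hac hbc)
  have hθ' : (θ : ℝ) = (p11 : ℝ) - p21 := by exact_mod_cast congrArg (Int.cast : ℤ → ℝ) hθ
  rcases mem_union.1 hs with h | h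
  · rw [h11 _ h, if_pos h] at hk
    have : (rowbar X1 a b : ℝ) + rowbar X1 a c + rowbar X1 b c = p11 + 3 := by
      exact_mod_cast congrArg (Nat.cast : ℕ → ℝ) hk
    rw [this, indR, if_pos h]; rw [hθ']; ring
  · have hn : ({a,b,c} : Finset (Fin n)) ∉ X1 := fun hx => (disjoint_left.1 hdisj hx) h
    rw [h21 _ h, if_neg hn] at hk
    have : (rowbar X1 a b : ℝ) + rowbar X1 a c + rowbar X1 b c = p21 + 0 := by
      exact_mod_cast congrArg (Nat.cast : ℕ → ℝ) hk
    rw [this, indR, if_neg hn]; ring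


/-- for a `θ`-equitable 2-partition of `J(n,3)` and four distinct
elements `a,b,c,d`:
`(ab*)-bar - (cd*)-bar = ((θ+3)/2)·(abc-bar + abd-bar - acd-bar - bcd-bar)`. -/
theorem stmt13 (n : ℕ) (X1 X2 : Finset (Finset (Fin n)))
    (hpart : ∀ s : Finset (Fin n), s.card = 3 ↔ s ∈ X1 ∪ X2)
    (hdisj : Disjoint X1 X2) (hne1 : X1.Nonempty) (hne2 : X2.Nonempty)
    (p11 p12 p21 p22 : ℕ)
    (h11 : ∀ s ∈ X1, nbc X1 s = p11) (h12 : ∀ s ∈ X1, nbc X2 s = p12)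
    (h21 : ∀ s ∈ X2, nbc X1 s = p21) (h22 : ∀ s ∈ X2, nbc X2 s = p22)
    (θ : ℤ) (hθ : θ = (p11 : ℤ) - (p21 : ℤ))
    (a b c d : Fin n) (hab : a ≠ b) (hac : a ≠ c) (had : a ≠ d)
    (hbc : b ≠ c) (hbd : b ≠ d) (hcd : c ≠ d) :
    (rowbar X1 a b : ℝ) - (rowbar X1 c d : ℝ)
      = ((θ : ℝ) + 3) / 2 *
        (indR X1 {a, b, c} + indR X1 {a, b, d}
          - indR X1 {a, c, d} - indR X1 {b, c, d}) := by
  have e1 := key2 X1 X2 hpart hdisj p11 p21 h11 h21 θ hθ a b c hab hac hbc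
  have e2 := key2 X1 X2 hpart hdisj p11 p21 h11 h21 θ hθ a b d hab had hbd
  have e3 := key2 X1 X2 hpart hdisj p11 p21 h11 h21 θ hθ a c d hac had hcd
  have e4 := key2 X1 X2 hpart hdisj p11 p21 h11 h21 θ hθ b c d hbc hbd hcd
  linarith
end

section
/- Let X = {X₁, X₂} be a θ-equitable 2-partition of J(n,3). For any five distinct elements a, b, c, d, e ∈ [n]: (ab*)-bar minus (ac*)-bar = ((θ+3)/2)·(abd-bar + abe-bar + cde-bar - acd-bar - ace-bar - bde-bar), where ū is the X₁-indicator and S̄ = Σ_{u∈S} ū. -/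
open Finset

lemma card3 {n : ℕ} (i j k : Fin n) (hij : i ≠ j) (hik : i ≠ k) (hjk : j ≠ k) :
    ({i, j, k} : Finset (Fin n)).card = 3 := by
  rw [card_insert_of_notMem (by simp [hij, hik]),
      card_insert_of_notMem (by simp [hjk]), card_singleton]

lemma interCard {n : ℕ} (t : Finset (Fin n)) (i j k : Fin n)
    (hij : i ≠ j) (hik : i ≠ k) (hjk : j ≠ k) :
    (({i, j, k} : Finset (Fin n)) ∩ t).card
      = (if i ∈ t then 1 else 0) + (if j ∈ t then 1 else 0) + (if k ∈ t then 1 else 0) := by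
  classical
  rw [show ({i, j, k} : Finset (Fin n)) ∩ t
        = ({i, j, k} : Finset (Fin n)).filter (· ∈ t) by
      ext x; simp [Finset.mem_filter, and_comm]]
  rw [Finset.card_filter]
  rw [Finset.sum_insert (by simp [hij, hik]), Finset.sum_insert (by simp [hjk]),
      Finset.sum_singleton, add_assoc]

lemma pointwise {n : ℕ} (t : Finset (Fin n)) (ht : t.card = 3) (i j k : Fin n)
    (hij : i ≠ j) (hik : i ≠ k) (hjk : j ≠ k) :
    (if i ∈ t ∧ j ∈ t then 1 else 0) + (if i ∈ t ∧ k ∈ t then 1 else 0)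
      + (if j ∈ t ∧ k ∈ t then 1 else 0)
      = (if (({i, j, k} : Finset (Fin n)) ∩ t).card = 2 then 1 else 0)
        + 3 * (if t = ({i, j, k} : Finset (Fin n)) then 1 else 0) := by
  classical
  rw [interCard t i j k hij hik hjk]
  by_cases hi : i ∈ t <;> by_cases hj : j ∈ t <;> by_cases hk : k ∈ t
  · have hsub : ({i, j, k} : Finset (Fin n)) ⊆ t := by
      intro x hx; simp at hx; rcases hx with h | h | h <;> subst h <;> assumption
    have heq : t = ({i, j, k} : Finset (Fin n)) :=
      (Finset.eq_of_subset_of_card_le hsub (by rw [ht, card3 i j k hij hik hjk])).symm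
    simp [hi, hj, hk, heq]
  all_goals {
    have hne : t ≠ ({i, j, k} : Finset (Fin n)) := by
      intro heq; subst heq; simp_all
    simp [hi, hj, hk, hne]
  }

lemma countsum {n : ℕ} (X1 : Finset (Finset (Fin n)))
    (hcard : ∀ t ∈ X1, t.card = 3) (i j k : Fin n)
    (hij : i ≠ j) (hik : i ≠ k) (hjk : j ≠ k) :
    rowbar X1 i j + rowbar X1 i k + rowbar X1 j k
      = nbc X1 {i, j, k} + 3 * (if ({i, j, k} : Finset (Fin n)) ∈ X1 then 1 else 0) := by
  classical
  unfold rowbar nbc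
  rw [Finset.card_filter, Finset.card_filter, Finset.card_filter, Finset.card_filter]
  rw [← Finset.sum_add_distrib, ← Finset.sum_add_distrib]
  have hrhs : (3 : ℕ) * (if ({i, j, k} : Finset (Fin n)) ∈ X1 then 1 else 0)
      = ∑ t ∈ X1, 3 * (if t = ({i, j, k} : Finset (Fin n)) then 1 else 0) := by
    simp only [mul_ite, mul_one, mul_zero]
    rw [Finset.sum_ite_eq' X1 ({i, j, k} : Finset (Fin n)) (fun _ => 3)]
  rw [hrhs, ← Finset.sum_add_distrib]
  exact Finset.sum_congr rfl fun t ht => pointwise t (hcard t ht) i j k hij hik hjk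

lemma keyid {n : ℕ} (X1 X2 : Finset (Finset (Fin n)))
    (hpart : ∀ s : Finset (Fin n), s.card = 3 ↔ s ∈ X1 ∪ X2)
    (hdisj : Disjoint X1 X2) (p11 p21 : ℕ)
    (h11 : ∀ s ∈ X1, nbc X1 s = p11) (h21 : ∀ s ∈ X2, nbc X1 s = p21)
    (θ : ℤ) (hθ : θ = (p11 : ℤ) - (p21 : ℤ)) (i j k : Fin n)
    (hij : i ≠ j) (hik : i ≠ k) (hjk : j ≠ k) :
    (rowbar X1 i j : ℝ) + rowbar X1 i k + rowbar X1 j k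
      = ((θ : ℝ) + 3) * indR X1 ({i, j, k} : Finset (Fin n)) + p21 := by
  classical
  have hcard : ∀ t ∈ X1, t.card = 3 := fun t ht =>
    (hpart t).mpr (Finset.mem_union_left _ ht)
  have hmem : ({i, j, k} : Finset (Fin n)) ∈ X1 ∪ X2 :=
    (hpart _).mp (card3 i j k hij hik hjk)
  have hcount := countsum X1 hcard i j k hij hik hjk
  have hθR : (p11 : ℝ) = (θ : ℝ) + p21 := by
    have : (θ : ℝ) = (p11 : ℝ) - (p21 : ℝ) := by exact_mod_cast congrArg (Int.cast : ℤ → ℝ) hθ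
    linarith
  rcases Finset.mem_union.mp hmem with h | h
  · have : rowbar X1 i j + rowbar X1 i k + rowbar X1 j k = p11 + 3 := by
      rw [hcount, h11 _ h, if_pos h]
    have hR : (rowbar X1 i j : ℝ) + rowbar X1 i k + rowbar X1 j k = (p11 : ℝ) + 3 := by
      exact_mod_cast congrArg (Nat.cast : ℕ → ℝ) this
    rw [hR, indR, if_pos h, hθR]; ring
  · have hnot : ({i, j, k} : Finset (Fin n)) ∉ X1 :=
      fun hmem1 => (Finset.disjoint_left.mp hdisj hmem1) h
    have : rowbar X1 i j + rowbar X1 i k + rowbar X1 j k = p21 := by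
      rw [hcount, h21 _ h, if_neg hnot]; ring
    have hR : (rowbar X1 i j : ℝ) + rowbar X1 i k + rowbar X1 j k = (p21 : ℝ) := by
      exact_mod_cast congrArg (Nat.cast : ℕ → ℝ) this
    rw [hR, indR, if_neg hnot]; ring

/-- for a `θ`-equitable 2-partition of `J(n,3)` and five distinct
elements `a,b,c,d,e`:
`(ab*)-bar - (ac*)-bar
   = ((θ+3)/2)·(abd-bar + abe-bar + cde-bar - acd-bar - ace-bar - bde-bar)`. -/
theorem stmt14 (n : ℕ) (X1 X2 : Finset (Finset (Fin n)))
    (hpart : ∀ s : Finset (Fin n), s.card = 3 ↔ s ∈ X1 ∪ X2)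
    (hdisj : Disjoint X1 X2) (hne1 : X1.Nonempty) (hne2 : X2.Nonempty)
    (p11 p12 p21 p22 : ℕ)
    (h11 : ∀ s ∈ X1, nbc X1 s = p11) (h12 : ∀ s ∈ X1, nbc X2 s = p12)
    (h21 : ∀ s ∈ X2, nbc X1 s = p21) (h22 : ∀ s ∈ X2, nbc X2 s = p22)
    (θ : ℤ) (hθ : θ = (p11 : ℤ) - (p21 : ℤ))
    (a b c d e : Fin n) (hab : a ≠ b) (hac : a ≠ c) (had : a ≠ d) (hae : a ≠ e)
    (hbc : b ≠ c) (hbd : b ≠ d) (hbe : b ≠ e) (hcd : c ≠ d) (hce : c ≠ e)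
    (hde : d ≠ e) :
    (rowbar X1 a b : ℝ) - (rowbar X1 a c : ℝ)
      = ((θ : ℝ) + 3) / 2 *
        (indR X1 {a, b, d} + indR X1 {a, b, e} + indR X1 {c, d, e}
          - indR X1 {a, c, d} - indR X1 {a, c, e} - indR X1 {b, d, e}) := by
  have K1 := keyid X1 X2 hpart hdisj p11 p21 h11 h21 θ hθ a b d hab had hbd
  have K2 := keyid X1 X2 hpart hdisj p11 p21 h11 h21 θ hθ a b e hab hae hbe
  have K3 := keyid X1 X2 hpart hdisj p11 p21 h11 h21 θ hθ a c d hac had hcd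
  have K4 := keyid X1 X2 hpart hdisj p11 p21 h11 h21 θ hθ a c e hac hae hce
  have K5 := keyid X1 X2 hpart hdisj p11 p21 h11 h21 θ hθ c d e hcd hce hde
  have K6 := keyid X1 X2 hpart hdisj p11 p21 h11 h21 θ hθ b d e hbd hbe hde
  linarith [K1, K2, K3, K4, K5, K6]
end

section
/- Let X = {X₁, X₂} be a λ₂-equitable 2-partition of J(n,3) with p₁₁ ≥ 2n-7, and suppose abc ∈ X₁ has difference tuple ((n-4)/2, (n-4)/2), i.e. (ab*)-bar - (ac*)-bar = (n-4)/2 = (ac*)-bar - (bc*)-bar. Then n ≤ 8. -/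
open Finset

/-- in a `λ₂`-equitable 2-partition of `J(n,3)` with
`p₁₁ ≥ 2n-7`, if `abc ∈ X₁` has difference tuple `((n-4)/2, (n-4)/2)`,
then `n ≤ 8`. -/
theorem stmt16 (n : ℕ) (X1 X2 : Finset (Finset (Fin n)))
    (hpart : ∀ s : Finset (Fin n), s.card = 3 ↔ s ∈ X1 ∪ X2)
    (hdisj : Disjoint X1 X2) (hne1 : X1.Nonempty) (hne2 : X2.Nonempty)
    (p11 p12 p21 p22 : ℕ)
    (h11 : ∀ s ∈ X1, nbc X1 s = p11) (h12 : ∀ s ∈ X1, nbc X2 s = p12)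
    (h21 : ∀ s ∈ X2, nbc X1 s = p21) (h22 : ∀ s ∈ X2, nbc X2 s = p22)
    (hlam : (p11 : ℤ) - (p21 : ℤ) = (n : ℤ) - 7)
    (hp11 : 2 * n - 7 ≤ p11)
    (a b c : Fin n) (hab : a ≠ b) (hac : a ≠ c) (hbc : b ≠ c)
    (habc : ({a, b, c} : Finset (Fin n)) ∈ X1)
    (hd1 : 2 * ((rowbar X1 a b : ℤ) - (rowbar X1 a c : ℤ)) = (n : ℤ) - 4)
    (hd2 : 2 * ((rowbar X1 a c : ℤ) - (rowbar X1 b c : ℤ)) = (n : ℤ) - 4) :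
    n ≤ 8 := by
  have hcard : ∀ t ∈ X1, t.card = 3 := fun t ht => (hpart t).2 (mem_union_left _ ht)
  have hs0 : ({a, b, c} : Finset (Fin n)).card = 3 := by
    rw [card_insert_of_notMem (by simp [hab, hac]),
      card_insert_of_notMem (by simp [hbc]), card_singleton]
  have hcard_int : ∀ t : Finset (Fin n),
      (({a, b, c} : Finset (Fin n)) ∩ t).card
        = (if a ∈ t then 1 else 0) + (if b ∈ t then 1 else 0) + (if c ∈ t then 1 else 0) := by
    intro t
    rw [← filter_mem_eq_inter, card_filter,
      sum_insert (by simp [hab, hac]), sum_insert (by simp [hbc]), sum_singleton]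
    ring
  have point : ∀ t ∈ X1,
      (if (({a, b, c} : Finset (Fin n)) ∩ t).card = 2 then 1 else 0)
        + (if t = ({a, b, c} : Finset (Fin n)) then 3 else 0)
      = ((if a ∈ t ∧ b ∈ t then 1 else 0) + (if a ∈ t ∧ c ∈ t then 1 else 0)
        + (if b ∈ t ∧ c ∈ t then (1 : ℕ) else 0)) := by
    intro t ht
    have h3 := hcard t ht
    have hint := hcard_int t
    by_cases ha : a ∈ t <;> by_cases hb : b ∈ t <;> by_cases hc : c ∈ t
    · -- all in: t = {a,b,c}
      have hsub : ({a, b, c} : Finset (Fin n)) ⊆ t := by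
        intro x hx
        simp only [mem_insert, mem_singleton] at hx
        rcases hx with rfl | rfl | rfl <;> assumption
      have : t = ({a, b, c} : Finset (Fin n)) :=
        (Finset.eq_of_subset_of_card_le hsub (by omega)).symm
      simp [this, hs0]
    all_goals {
      have hne : t ≠ ({a, b, c} : Finset (Fin n)) := by
        rintro rfl; revert ha hb hc; simp
      simp [hint, ha, hb, hc, hne, card_pair hab, card_pair hac, card_pair hbc]
    }
  have key : nbc X1 ({a, b, c} : Finset (Fin n)) + 3
      = rowbar X1 a b + rowbar X1 a c + rowbar X1 b c := by
    unfold nbc rowbar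
    rw [card_filter, card_filter, card_filter, card_filter]
    have hsum := Finset.sum_congr rfl point
    rw [Finset.sum_add_distrib] at hsum
    rw [Finset.sum_add_distrib, Finset.sum_add_distrib] at hsum
    have h3 : (∑ t ∈ X1, if t = ({a, b, c} : Finset (Fin n)) then 3 else 0) = 3 := by
      rw [Finset.sum_ite_eq' X1 ({a, b, c} : Finset (Fin n)) (fun _ => 3)]
      simp [habc]
    omega
  have hub : rowbar X1 a b ≤ n - 2 := by
    unfold rowbar
    have hsub : X1.filter (fun s => a ∈ s ∧ b ∈ s)
        ⊆ ((univ \ {a, b} : Finset (Fin n)).image fun x => insert x {a, b}) := by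
      intro t ht
      simp only [mem_filter] at ht
      obtain ⟨ht1, ha, hb⟩ := ht
      have h3 := hcard t ht1
      have hsub2 : ({a, b} : Finset (Fin n)) ⊆ t := by
        intro x hx
        simp only [mem_insert, mem_singleton] at hx
        rcases hx with rfl | rfl <;> assumption
      have hc2 : ({a, b} : Finset (Fin n)).card = 2 := by
        rw [card_insert_of_notMem (by simp [hab]), card_singleton]
      have h1 : (t \ {a, b}).card = 1 := by
        rw [card_sdiff_of_subset hsub2, h3, hc2]
      obtain ⟨x, hx⟩ := card_eq_one.mp h1
      have hxt : x ∈ t \ ({a, b} : Finset (Fin n)) := hx ▸ mem_singleton_self x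
      simp only [mem_sdiff, mem_insert, mem_singleton, not_or] at hxt
      refine mem_image.mpr ⟨x, ?_, ?_⟩
      · simp [hxt.2.1, hxt.2.2]
      · have hins : insert x ({a, b} : Finset (Fin n)) ⊆ t := insert_subset hxt.1 hsub2
        have hci : (insert x ({a, b} : Finset (Fin n))).card = 3 := by
          rw [card_insert_of_notMem (by simp [hxt.2.1, hxt.2.2]), hc2]
        exact Finset.eq_of_subset_of_card_le hins (by omega)
    calc (X1.filter fun s => a ∈ s ∧ b ∈ s).card
        ≤ _ := card_le_card hsub
      _ ≤ (univ \ {a, b} : Finset (Fin n)).card := card_image_le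
      _ = n - 2 := by
          rw [card_sdiff_of_subset (subset_univ _), card_univ, Fintype.card_fin,
            card_insert_of_notMem (by simp [hab]), card_singleton]
  have hlb : 1 ≤ rowbar X1 b c := by
    apply card_pos.mpr
    exact ⟨{a, b, c}, mem_filter.mpr ⟨habc, by simp, by simp⟩⟩
  have hp : nbc X1 ({a, b, c} : Finset (Fin n)) = p11 := h11 _ habc
  omega
end

section
/- Let X = {X₁, X₂} be a λ₂-equitable 2-partition of J(n,3) with p₁₁ ≥ 2n-7 and n > 14. Suppose abc ∈ X₁ has difference tuple (0,0) (all three row sums (ab*)-bar = (ac*)-bar = (bc*)-bar), and suppose the nb-array of abc consists only of all-ones and all-zeros columns, with exactly one additional column pattern (1,1,0)ᵀ and one (0,0,1)ᵀ. Then a contradiction follows (this configuration forces n ≤ 14): indeed, setting t = (ab*)-bar - 1 one has p₁₁ = 3t ≥ 2n-7, so t > n/2, while applying the five-element row-difference identity to abd for the index d of the (1,1,0) column yields (ad*)-bar = t + 1 + (n-4)/2 > n-2, which is impossible. -/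
open Finset

lemma card3_inter {n : ℕ} (i j k : Fin n) (hij : i ≠ j) (hik : i ≠ k) (hjk : j ≠ k)
    (t : Finset (Fin n)) :
    (({i,j,k} : Finset (Fin n)) ∩ t).card
      = (if i ∈ t then 1 else 0) + (if j ∈ t then 1 else 0) + (if k ∈ t then 1 else 0) := by
  rw [← Finset.filter_mem_eq_inter, Finset.card_filter,
    Finset.sum_insert (by simp [hij, hik]), Finset.sum_insert (by simp [hjk]),
    Finset.sum_singleton]
  ring

lemma card3_self {n : ℕ} (i j k : Fin n) (hij : i ≠ j) (hik : i ≠ k) (hjk : j ≠ k) :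
    ({i,j,k} : Finset (Fin n)).card = 3 := by
  rw [Finset.card_insert_of_notMem (by simp [hij, hik]),
    Finset.card_insert_of_notMem (by simp [hjk]), Finset.card_singleton]

lemma pair_count {n : ℕ} (X : Finset (Finset (Fin n))) (hX : ∀ s ∈ X, s.card = 3)
    (i j k : Fin n) (hij : i ≠ j) (hik : i ≠ k) (hjk : j ≠ k) :
    rowbar X i j + rowbar X i k + rowbar X j k
      = nbc X {i,j,k} + 3 * (if ({i,j,k} : Finset (Fin n)) ∈ X then 1 else 0) := by
  unfold rowbar nbc
  rw [Finset.card_filter, Finset.card_filter, Finset.card_filter, Finset.card_filter,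
    ← Finset.sum_ite_eq' X ({i,j,k} : Finset (Fin n)) (fun _ => (1:ℕ)),
    Finset.mul_sum, ← Finset.sum_add_distrib, ← Finset.sum_add_distrib,
    ← Finset.sum_add_distrib]
  refine Finset.sum_congr rfl fun t ht => ?_
  have h3 := hX t ht
  have hc := card3_inter i j k hij hik hjk t
  by_cases hi : i ∈ t <;> by_cases hj : j ∈ t <;> by_cases hk : k ∈ t
  · have hts : t = {i,j,k} := by
      refine (Finset.eq_of_subset_of_card_le ?_ ?_).symm
      · intro x hx
        simp only [Finset.mem_insert, Finset.mem_singleton] at hx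
        rcases hx with rfl | rfl | rfl <;> assumption
      · rw [h3, card3_self i j k hij hik hjk]
    rw [hc]
    simp [hi, hj, hk, hts]
  all_goals {
    have hts : t ≠ ({i,j,k} : Finset (Fin n)) := by
      rintro rfl; simp_all
    rw [hc]; simp [hi, hj, hk, hts] }

lemma rowbar_le {n : ℕ} (X : Finset (Finset (Fin n))) (hX : ∀ s ∈ X, s.card = 3)
    (i j : Fin n) (hij : i ≠ j) : rowbar X i j ≤ n - 2 := by
  have hcard2 : ({i,j} : Finset (Fin n)).card = 2 := by
    rw [Finset.card_insert_of_notMem (by simp [hij]), Finset.card_singleton]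
  have key : rowbar X i j ≤ ((Finset.univ \ ({i,j} : Finset (Fin n))).image
      (fun g => ({g} : Finset (Fin n)))).card := by
    apply Finset.card_le_card_of_injOn (fun s => s \ ({i,j} : Finset (Fin n)))
    · intro s hs
      simp only [Finset.coe_filter, Set.mem_setOf_eq, Finset.mem_coe, Finset.mem_filter] at hs ⊢
      obtain ⟨hsX, hi, hj⟩ := hs
      have hsub : ({i,j} : Finset (Fin n)) ⊆ s := by
        intro x hx; simp only [Finset.mem_insert, Finset.mem_singleton] at hx
        rcases hx with rfl | rfl <;> assumption
      have h1 : (s \ ({i,j} : Finset (Fin n))).card = 1 := by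
        rw [Finset.card_sdiff_of_subset hsub, hX s hsX, hcard2]
      obtain ⟨g, hg⟩ := Finset.card_eq_one.mp h1
      have hgmem : g ∈ s \ ({i,j} : Finset (Fin n)) := by rw [hg]; simp
      rw [hg]
      refine Finset.mem_image.mpr ⟨g, ?_, rfl⟩
      simp only [Finset.mem_sdiff] at hgmem ⊢
      exact ⟨Finset.mem_univ g, hgmem.2⟩
    · intro s hs s' hs' h
      simp only [Finset.coe_filter, Set.mem_setOf_eq] at hs hs'
      have hsub : ({i,j} : Finset (Fin n)) ⊆ s := by
        intro x hx; simp only [Finset.mem_insert, Finset.mem_singleton] at hx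
        rcases hx with rfl | rfl
        exacts [hs.2.1, hs.2.2]
      have hsub' : ({i,j} : Finset (Fin n)) ⊆ s' := by
        intro x hx; simp only [Finset.mem_insert, Finset.mem_singleton] at hx
        rcases hx with rfl | rfl
        exacts [hs'.2.1, hs'.2.2]
      calc s = s \ ({i,j} : Finset (Fin n)) ∪ {i,j} := by
              rw [Finset.sdiff_union_of_subset hsub]
        _ = s' \ ({i,j} : Finset (Fin n)) ∪ {i,j} := by
              rw [show s \ ({i,j} : Finset (Fin n)) = s' \ ({i,j} : Finset (Fin n)) from h]
        _ = s' := Finset.sdiff_union_of_subset hsub'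
  calc rowbar X i j ≤ _ := key
    _ ≤ (Finset.univ \ ({i,j} : Finset (Fin n))).card := Finset.card_image_le
    _ = n - 2 := by
        rw [Finset.card_sdiff_of_subset (Finset.subset_univ _), hcard2, Finset.card_univ,
          Fintype.card_fin]

/-- in a `λ₂`-equitable 2-partition of `J(n,3)` with
`p₁₁ ≥ 2n-7` and `n > 14`, there is no vertex `abc ∈ X₁` with difference tuple
`(0,0)` whose nb-array consists only of all-ones and all-zeros columns together
with exactly one column `(1,1,0)ᵀ` (index `d`) and one column `(0,0,1)ᵀ`
(index `e`); such a configuration is contradictory for `n > 14`. -/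
theorem stmt19 (n : ℕ) (hn : 14 < n)
    (X1 X2 : Finset (Finset (Fin n)))
    (hpart : ∀ s : Finset (Fin n), s.card = 3 ↔ s ∈ X1 ∪ X2)
    (hdisj : Disjoint X1 X2) (hne1 : X1.Nonempty) (hne2 : X2.Nonempty)
    (p11 p12 p21 p22 : ℕ)
    (h11 : ∀ s ∈ X1, nbc X1 s = p11) (h12 : ∀ s ∈ X1, nbc X2 s = p12)
    (h21 : ∀ s ∈ X2, nbc X1 s = p21) (h22 : ∀ s ∈ X2, nbc X2 s = p22)
    (hlam : (p11 : ℤ) - (p21 : ℤ) = (n : ℤ) - 7)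
    (hp11 : 2 * n - 7 ≤ p11)
    (a b c d e : Fin n) (hab : a ≠ b) (hac : a ≠ c) (hbc : b ≠ c)
    (hde : d ≠ e)
    (hd : d ∉ ({a, b, c} : Finset (Fin n))) (he : e ∉ ({a, b, c} : Finset (Fin n)))
    (habc : ({a, b, c} : Finset (Fin n)) ∈ X1)
    (hdiff1 : rowbar X1 a b = rowbar X1 a c)
    (hdiff2 : rowbar X1 a c = rowbar X1 b c)
    (hcold : ({a, b, d} : Finset (Fin n)) ∈ X1 ∧
             ({a, c, d} : Finset (Fin n)) ∈ X1 ∧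
             ({b, c, d} : Finset (Fin n)) ∈ X2)
    (hcole : ({a, b, e} : Finset (Fin n)) ∈ X2 ∧
             ({a, c, e} : Finset (Fin n)) ∈ X2 ∧
             ({b, c, e} : Finset (Fin n)) ∈ X1)
    (hrest : ∀ g : Fin n, g ∉ ({a, b, c, d, e} : Finset (Fin n)) →
      (({a, b, g} : Finset (Fin n)) ∈ X1 ∧ ({a, c, g} : Finset (Fin n)) ∈ X1 ∧
         ({b, c, g} : Finset (Fin n)) ∈ X1) ∨
      (({a, b, g} : Finset (Fin n)) ∈ X2 ∧ ({a, c, g} : Finset (Fin n)) ∈ X2 ∧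
         ({b, c, g} : Finset (Fin n)) ∈ X2)) :
    False := by
  simp only [Finset.mem_insert, Finset.mem_singleton, not_or] at hd
  obtain ⟨hda, hdb, hdc⟩ := hd
  have had : a ≠ d := fun h => hda h.symm
  have hbd : b ≠ d := fun h => hdb h.symm
  have hcd : c ≠ d := fun h => hdc h.symm
  have hX1 : ∀ s ∈ X1, s.card = 3 := fun s hs =>
    (hpart s).mpr (Finset.mem_union_left _ hs)
  -- equation at abc
  have e1 := pair_count X1 hX1 a b c hab hac hbc
  rw [h11 _ habc, if_pos habc] at e1
  -- equation at abd
  have e2 := pair_count X1 hX1 a b d hab had hbd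
  rw [h11 _ hcold.1, if_pos hcold.1] at e2
  -- equation at acd
  have e3 := pair_count X1 hX1 a c d hac had hcd
  rw [h11 _ hcold.2.1, if_pos hcold.2.1] at e3
  -- equation at bcd (in X2)
  have hbcd1 : ({b, c, d} : Finset (Fin n)) ∉ X1 :=
    Finset.disjoint_right.mp hdisj hcold.2.2
  have e4 := pair_count X1 hX1 b c d hbc hbd hcd
  rw [h21 _ hcold.2.2, if_neg hbcd1] at e4
  -- bound
  have hb1 := rowbar_le X1 hX1 a d had
  omega
end
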